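/- Two-point stationary states, coupled case, part (d): assume D^{(12)} ≠ 0. There exist a two-species distribution ρ and indices ι ≠ κ ∈ {1,2} such that ρ^{(1)}(x_ι) = 0, ρ^{(2)}(x_ι) = 1 (so species 1 has full mass at x_κ and species 2 full mass at x_ι) and v^{(1)}_{ικ} > 0, v^{(2)}_{ικ} < 0, if and only if D^{(11)} < D^{(12)} and D^{(22)} < D^{(12)}. In that case the distribution is ρ^{(1)}(x_κ) = 1, ρ^{(2)}(x_ι) = 1, and the configuration with the roles of x_ι and x_κ interchanged is also such a distribution. -/
import Mathlib


open Finset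

/-- The velocity `v^{(i)}_{ικ}` on the two-point space; `ρ k l` denotes the vertex *mass*
`ρ^{(k)}(x_l)`, so that `∑_λ (ΔK) ρ^{(k)}_λ μ_λ = ∑_l (ΔK) ρ k l`. -/
noncomputable def vel2 {d : ℕ} (x : Fin 2 → EuclideanSpace ℝ (Fin d))
    (K : Fin 2 → Fin 2 → EuclideanSpace ℝ (Fin d) → EuclideanSpace ℝ (Fin d) → ℝ)
    (ρ : Fin 2 → Fin 2 → ℝ) (i ι κ : Fin 2) : ℝ :=
  ∑ k : Fin 2, ∑ l : Fin 2, (K i k (x ι) (x l) - K i k (x κ) (x l)) * ρ k l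

/-- A two-species distribution on the two-point space, in terms of the vertex masses. -/
def IsDist2 (ρ : Fin 2 → Fin 2 → ℝ) : Prop :=
  (∀ i ι, 0 ≤ ρ i ι) ∧ ∀ i, ρ i 0 + ρ i 1 = 1

/-- Proposition 3.6 d) (coupled case): a stationary state with the two species aggregated
at opposite vertices (i.e. `ρ^{(1)}(x_ι) = 0`, `ρ^{(2)}(x_ι) = 1`, `v^{(1)}_{ικ} > 0`,
`v^{(2)}_{ικ} < 0`) exists iff `D^{(11)} < D^{(12)}` and `D^{(22)} < D^{(12)}`; in that
case species 1 has full mass at `x_κ` and species 2 at `x_ι`, and the configuration with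
the roles of the two vertices interchanged also occurs. -/
theorem two_point_stationary_coupled_d
    (d : ℕ) (x : Fin 2 → EuclideanSpace ℝ (Fin d)) (hx : x 0 ≠ x 1)
    (μ : Fin 2 → ℝ) (hμ : ∀ ι, 0 < μ ι)
    (η12 : ℝ) (hη : 0 < η12)
    (K : Fin 2 → Fin 2 → EuclideanSpace ℝ (Fin d) → EuclideanSpace ℝ (Fin d) → ℝ)
    (hKsym : ∀ i k p q, K i k p q = K i k q p)
    (hK12 : ∀ p q, K 0 1 p q = K 1 0 p q)
    (hKdiag : ∀ i k : Fin 2, ∀ p q : EuclideanSpace ℝ (Fin d), K i k p p = K i k q q)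
    (D : Fin 2 → Fin 2 → ℝ)
    (hD : ∀ i k, D i k = K i k (x 0) (x 0) - K i k (x 0) (x 1))
    (hD12 : D 0 1 ≠ 0) :
    ((∃ ρ, IsDist2 ρ ∧ ∃ ι κ : Fin 2, ι ≠ κ ∧
        ρ 0 ι = 0 ∧ ρ 1 ι = 1 ∧ 0 < vel2 x K ρ 0 ι κ ∧ vel2 x K ρ 1 ι κ < 0)
      ↔ (D 0 0 < D 0 1 ∧ D 1 1 < D 0 1)) ∧
    (∀ ρ, IsDist2 ρ → ∀ ι κ : Fin 2, ι ≠ κ →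
      ρ 0 ι = 0 → ρ 1 ι = 1 → 0 < vel2 x K ρ 0 ι κ → vel2 x K ρ 1 ι κ < 0 →
        ρ 0 κ = 1 ∧ ρ 1 ι = 1) ∧
    ((D 0 0 < D 0 1 ∧ D 1 1 < D 0 1) →
      ∀ ι κ : Fin 2, ι ≠ κ →
        ∃ ρ, IsDist2 ρ ∧ ρ 0 ι = 0 ∧ ρ 1 ι = 1 ∧
          0 < vel2 x K ρ 0 ι κ ∧ vel2 x K ρ 1 ι κ < 0) := by
  have h2 : ∀ j : Fin 2, j = 0 ∨ j = 1 := by decide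
  have hD10 : D 1 0 = D 0 1 := by rw [hD, hD, hK12, hK12]
  -- key formula: vel2 = Σ_k D i k (ρ k ι − ρ k κ)
  have key : ∀ (ρ : Fin 2 → Fin 2 → ℝ) (i ι κ : Fin 2), ι ≠ κ →
      vel2 x K ρ i ι κ = D i 0 * (ρ 0 ι - ρ 0 κ) + D i 1 * (ρ 1 ι - ρ 1 κ) := by
    intro ρ i ι κ hne
    rcases h2 ι with rfl | rfl <;> rcases h2 κ with rfl | rfl <;>
      first
      | exact absurd rfl hne
      | (simp only [vel2, Fin.sum_univ_two, hD]
         rw [hKsym i 0 (x 1) (x 0), hKsym i 1 (x 1) (x 0),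
             hKdiag i 0 (x 1) (x 0), hKdiag i 1 (x 1) (x 0)]
         ring)
  have hsum : ∀ (ρ : Fin 2 → Fin 2 → ℝ), IsDist2 ρ → ∀ (i ι κ : Fin 2), ι ≠ κ →
      ρ i ι + ρ i κ = 1 := by
    intro ρ hρ i ι κ hne
    rcases h2 ι with rfl | rfl <;> rcases h2 κ with rfl | rfl <;>
      first
      | exact absurd rfl hne
      | linarith [hρ.2 i]
  -- the explicit distribution
  have build : ∀ ι κ : Fin 2, ι ≠ κ →
      ∃ ρ, IsDist2 ρ ∧ ρ 0 ι = 0 ∧ ρ 0 κ = 1 ∧ ρ 1 ι = 1 ∧ ρ 1 κ = 0 := by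
    intro ι κ hne
    refine ⟨fun k l => if l = ι then (if k = 0 then 0 else 1) else (if k = 0 then 1 else 0),
      ⟨?_, ?_⟩, ?_, ?_, ?_, ?_⟩
    · intro i l; dsimp only; split <;> split <;> norm_num
    · intro i
      rcases h2 ι with rfl | rfl <;> rcases h2 κ with rfl | rfl <;>
        simp_all <;> split <;> norm_num
    · simp
    · simp [hne.symm]
    · simp
    · simp [hne.symm]
  refine ⟨⟨?_, ?_⟩, ?_, ?_⟩
  · rintro ⟨ρ, hρ, ι, κ, hne, h0, h1, hv1, hv2⟩
    have e0 : ρ 0 κ = 1 := by have := hsum ρ hρ 0 ι κ hne; linarith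
    have e1 : ρ 1 κ = 0 := by have := hsum ρ hρ 1 ι κ hne; linarith
    rw [key ρ 0 ι κ hne, h0, h1, e0, e1] at hv1
    rw [key ρ 1 ι κ hne, h0, h1, e0, e1, hD10] at hv2
    constructor <;> nlinarith
  · rintro ⟨hA, hB⟩
    obtain ⟨ρ, hρ, h0, h0', h1, h1'⟩ := build 0 1 (by decide)
    refine ⟨ρ, hρ, 0, 1, by decide, h0, h1, ?_, ?_⟩
    · rw [key ρ 0 0 1 (by decide), h0, h0', h1, h1']; nlinarith
    · rw [key ρ 1 0 1 (by decide), h0, h0', h1, h1', hD10]; nlinarith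
  · intro ρ hρ ι κ hne h0 h1 _ _
    exact ⟨by have := hsum ρ hρ 0 ι κ hne; linarith, h1⟩
  · rintro ⟨hA, hB⟩ ι κ hne
    obtain ⟨ρ, hρ, h0, h0', h1, h1'⟩ := build ι κ hne
    refine ⟨ρ, hρ, h0, h1, ?_, ?_⟩
    · rw [key ρ 0 ι κ hne, h0, h0', h1, h1']; nlinarith
    · rw [key ρ 1 ι κ hne, h0, h0', h1, h1', hD10]; nlinarith
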